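/- arXiv:math/9904044 — 3 statements merged into one kernel-verified Lean document; each statement's English description precedes it below -/
import Mathlib

section
/- Let L be a Hilbert space, G a group of unitary operators on L, and 𝒜 the von Neumann algebra (or just the set) of bounded operators commuting with every element of G. Suppose 𝒜 is commutative, (M, D) is a densely defined symmetric operator on L, and M commutes with every element of G (i.e., each g ∈ G maps D into D and Mg(v) = gM(v) for v ∈ D). Then M is essentially self-adjoint, i.e., M has a unique self-adjoint extension. -/
open scoped InnerProductSpace

/-- An unbounded operator `(M, D)` commutes with a bounded operator `A` if `A` maps the
domain into itself and `M (A v) = A (M v)` on the domain. -/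
def LinearPMap.CommutesWith {E : Type*} [NormedAddCommGroup E] [InnerProductSpace ℂ E]
    (M : E →ₗ.[ℂ] E) (A : E →L[ℂ] E) : Prop :=
  ∀ v : M.domain, ∃ hv : A (v : E) ∈ M.domain, M ⟨A (v : E), hv⟩ = A (M v)

open scoped ComplexConjugate in
section
noncomputable section

namespace EsaAux

variable {E : Type*} [NormedAddCommGroup E] [InnerProductSpace ℂ E]

/-- Extend a continuous linear map on a dense submodule to the whole space. -/
noncomputable def extendDense {X Y : Type*} [NormedAddCommGroup X] [NormedSpace ℂ X]
    [NormedAddCommGroup Y] [NormedSpace ℂ Y] [CompleteSpace Y]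
    (V : Submodule ℂ X) (hV : Dense (V : Set X)) (f : V →L[ℂ] Y) : X →L[ℂ] Y :=
  f.extend V.subtypeL

theorem extendDense_eq {X Y : Type*} [NormedAddCommGroup X] [NormedSpace ℂ X]
    [NormedAddCommGroup Y] [NormedSpace ℂ Y] [CompleteSpace Y]
    (V : Submodule ℂ X) (hV : Dense (V : Set X)) (f : V →L[ℂ] Y) (v : V) :
    extendDense V hV f (v : X) = f v :=
  ContinuousLinearMap.extend_eq (f := f) (e := V.subtypeL) hV.denseRange_val isUniformEmbedding_subtype_val.isUniformInducing v

/-- The map `x ↦ M x + ε i x` on the domain of `M`. -/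
noncomputable def Sm (M : E →ₗ.[ℂ] E) (ε : ℝ) : M.domain →ₗ[ℂ] E :=
  M.toFun + ((ε : ℂ) * Complex.I) • M.domain.subtype

theorem Sm_apply (M : E →ₗ.[ℂ] E) (ε : ℝ) (x : M.domain) :
    Sm M ε x = M x + ((ε : ℂ) * Complex.I) • (x : E) := rfl

variable {M : E →ₗ.[ℂ] E}

theorem inner_M_self_real (hsym : ∀ u v : M.domain, ⟪M u, (v : E)⟫_ℂ = ⟪(u : E), M v⟫_ℂ)
    (x : M.domain) : (⟪M x, (x : E)⟫_ℂ).im = 0 := by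
  have h1 : conj (⟪M x, (x : E)⟫_ℂ) = ⟪M x, (x : E)⟫_ℂ := by
    rw [inner_conj_symm, ← hsym]
  exact Complex.conj_eq_iff_im.mp h1

theorem norm_Sm_sq (hsym : ∀ u v : M.domain, ⟪M u, (v : E)⟫_ℂ = ⟪(u : E), M v⟫_ℂ)
    {ε : ℝ} (hε : ε ^ 2 = 1) (x : M.domain) :
    ‖Sm M ε x‖ ^ 2 = ‖M x‖ ^ 2 + ‖(x : E)‖ ^ 2 := by
  rw [Sm_apply, @norm_add_sq ℂ]
  have h1 : RCLike.re ⟪M x, ((ε : ℂ) * Complex.I) • (x : E)⟫_ℂ = 0 := by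
    rw [inner_smul_right]
    have him := inner_M_self_real hsym x
    simp [Complex.mul_re, him]
  have h2 : ‖((ε : ℂ) * Complex.I) • (x : E)‖ ^ 2 = ‖(x : E)‖ ^ 2 := by
    rw [norm_smul]
    have : ‖(ε : ℂ) * Complex.I‖ ^ 2 = 1 := by
      rw [norm_mul]
      simp only [Complex.norm_real, Complex.norm_I, mul_one, Real.norm_eq_abs, sq_abs]
      exact hε
    rw [mul_pow, this, one_mul]
  rw [h1, h2]
  ring

theorem norm_Sm_neg (hsym : ∀ u v : M.domain, ⟪M u, (v : E)⟫_ℂ = ⟪(u : E), M v⟫_ℂ)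
    {ε : ℝ} (hε : ε ^ 2 = 1) (x : M.domain) :
    ‖Sm M (-ε) x‖ = ‖Sm M ε x‖ := by
  have h1 := norm_Sm_sq hsym (show (-ε) ^ 2 = 1 by rw [neg_sq]; exact hε) x
  have h2 := norm_Sm_sq hsym hε x
  rw [← Real.sqrt_sq (norm_nonneg (Sm M (-ε) x)), ← Real.sqrt_sq (norm_nonneg (Sm M ε x)),
    h1, h2]

theorem norm_le_Sm (hsym : ∀ u v : M.domain, ⟪M u, (v : E)⟫_ℂ = ⟪(u : E), M v⟫_ℂ)
    {ε : ℝ} (hε : ε ^ 2 = 1) (x : M.domain) : ‖(x : E)‖ ≤ ‖Sm M ε x‖ := by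
  have h := norm_Sm_sq hsym hε x
  nlinarith [norm_nonneg (Sm M ε x), norm_nonneg (x : E), norm_nonneg (M x), sq_nonneg (‖M x‖)]

theorem normM_le_Sm (hsym : ∀ u v : M.domain, ⟪M u, (v : E)⟫_ℂ = ⟪(u : E), M v⟫_ℂ)
    {ε : ℝ} (hε : ε ^ 2 = 1) (x : M.domain) : ‖M x‖ ≤ ‖Sm M ε x‖ := by
  have h := norm_Sm_sq hsym hε x
  nlinarith [norm_nonneg (Sm M ε x), norm_nonneg (x : E), norm_nonneg (M x)]

theorem Sm_injective (hsym : ∀ u v : M.domain, ⟪M u, (v : E)⟫_ℂ = ⟪(u : E), M v⟫_ℂ)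
    {ε : ℝ} (hε : ε ^ 2 = 1) : Function.Injective (Sm M ε) := by
  rw [← LinearMap.ker_eq_bot, LinearMap.ker_eq_bot']
  intro x hx
  have h := norm_le_Sm hsym hε x
  rw [hx, norm_zero] at h
  have : ‖(x : E)‖ = 0 := le_antisymm h (norm_nonneg _)
  have : (x : E) = 0 := norm_eq_zero.mp this
  exact Subtype.ext this

section CompleteE

variable [CompleteSpace E]

theorem exists_W (hsym : ∀ u v : M.domain, ⟪M u, (v : E)⟫_ℂ = ⟪(u : E), M v⟫_ℂ)
    {ε : ℝ} (hε : ε ^ 2 = 1) :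
    ∃ W : E →L[ℂ] E,
      (∀ x : M.domain, W (Sm M ε x) = Sm M (-ε) x) ∧
      (∀ u ∈ ((LinearMap.range (Sm M ε)).topologicalClosure)ᗮ, W u = 0) := by
  set V : Submodule ℂ E := LinearMap.range (Sm M ε) with hV
  set R : Submodule ℂ E := V.topologicalClosure with hRdef
  haveI : CompleteSpace R := V.isClosed_topologicalClosure.completeSpace_coe
  have hinj := Sm_injective hsym hε
  set eqv : M.domain ≃ₗ[ℂ] V := LinearEquiv.ofInjective (Sm M ε) hinj with heqv
  set V' : Submodule ℂ R := V.comap R.subtype with hV'def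
  let ι : V' →ₗ[ℂ] V :=
    { toFun := fun v => ⟨((v : R) : E), v.2⟩
      map_add' := fun a b => rfl
      map_smul' := fun c a => rfl }
  let cayFun : V' →ₗ[ℂ] E := (Sm M (-ε)).comp (eqv.symm.toLinearMap.comp ι)
  have hSm_symm : ∀ v : V, Sm M ε (eqv.symm v) = (v : E) := fun v =>
    LinearEquiv.ofInjective_symm_apply (Sm M ε) v
  have hbound : ∀ v : V', ‖cayFun v‖ ≤ 1 * ‖v‖ := by
    intro v
    have h1 : ‖cayFun v‖ = ‖Sm M (-ε) (eqv.symm (ι v))‖ := rfl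
    rw [h1, norm_Sm_neg hsym hε, hSm_symm (ι v), one_mul]
    rfl
  let cay' : V' →L[ℂ] E := cayFun.mkContinuous 1 hbound
  have hV' : Dense (V' : Set R) := by
    intro y
    have hy : (y : E) ∈ closure (V : Set E) := by
      rw [← Submodule.topologicalClosure_coe]
      exact y.2
    obtain ⟨u, hu, hlim⟩ := mem_closure_iff_seq_limit.mp hy
    refine mem_closure_iff_seq_limit.mpr
      ⟨fun n => ⟨u n, V.le_topologicalClosure (hu n)⟩, fun n => hu n, ?_⟩
    rw [tendsto_subtype_rng]
    exact hlim
  let W : E →L[ℂ] E := (extendDense V' hV' cay').comp (Submodule.orthogonalProjectionOnto R)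
  refine ⟨W, ?_, ?_⟩
  · intro x
    have hmemV : Sm M ε x ∈ V := LinearMap.mem_range_self _ x
    have hmemR : Sm M ε x ∈ R := V.le_topologicalClosure hmemV
    have hproj : Submodule.orthogonalProjectionOnto R (Sm M ε x) = ⟨Sm M ε x, hmemR⟩ :=
      Subtype.ext (Submodule.starProjection_eq_self_iff.mpr hmemR)
    have hW : W (Sm M ε x) = cay' ⟨⟨Sm M ε x, hmemR⟩, hmemV⟩ := by
      show (extendDense V' hV' cay') (Submodule.orthogonalProjectionOnto R (Sm M ε x)) = _
      rw [hproj]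
      exact extendDense_eq V' hV' cay' ⟨⟨Sm M ε x, hmemR⟩, hmemV⟩
    rw [hW]
    have h2 : cay' ⟨⟨Sm M ε x, hmemR⟩, hmemV⟩
        = Sm M (-ε) (eqv.symm ⟨Sm M ε x, hmemV⟩) := rfl
    rw [h2]
    have h3 : (⟨Sm M ε x, hmemV⟩ : V) = eqv x := by
      refine Subtype.ext ?_
      rw [heqv, LinearEquiv.ofInjective_apply]
    rw [h3, LinearEquiv.symm_apply_apply]
  · intro u hu
    show (extendDense V' hV' cay') (Submodule.orthogonalProjectionOnto R u) = 0
    rw [Submodule.orthogonalProjectionOnto_apply_of_mem_orthogonal hu, map_zero]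

theorem dense_range_Sm (G : Subgroup (unitary (E →L[ℂ] E)))
    (hdense : Dense (M.domain : Set E))
    (hsym : ∀ u v : M.domain, ⟪M u, (v : E)⟫_ℂ = ⟪(u : E), M v⟫_ℂ)
    (hcomm : ∀ g ∈ G, M.CommutesWith (g : E →L[ℂ] E))
    (habelian : ∀ A B : E →L[ℂ] E,
      (∀ g ∈ G, A * (g : E →L[ℂ] E) = (g : E →L[ℂ] E) * A) →
      (∀ g ∈ G, B * (g : E →L[ℂ] E) = (g : E →L[ℂ] E) * B) →
      A * B = B * A)
    {ε : ℝ} (hε : ε ^ 2 = 1) :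
    Dense ((LinearMap.range (Sm M ε) : Submodule ℂ E) : Set E) := by
  set V : Submodule ℂ E := LinearMap.range (Sm M ε) with hVdef
  set R : Submodule ℂ E := V.topologicalClosure with hRdef
  haveI : CompleteSpace R := V.isClosed_topologicalClosure.completeSpace_coe
  obtain ⟨W, hW1, hW2⟩ := exists_W hsym hε
  have hmemR : ∀ u ∈ V, u ∈ R := fun u hu => V.le_topologicalClosure hu
  have hclV : ∀ u, u ∈ R → u ∈ closure (V : Set E) := by
    intro u hu
    rw [← Submodule.topologicalClosure_coe]
    exact hu
  have hclV' : ∀ u, u ∈ closure (V : Set E) → u ∈ R := by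
    intro u hu
    rwa [← Submodule.topologicalClosure_coe] at hu
  -- the projection onto `K := Rᗮ`
  let P : E →L[ℂ] E := (Rᗮ).subtypeL.comp (Submodule.orthogonalProjectionOnto (Rᗮ))
  have hPval : ∀ u, P u = (Submodule.orthogonalProjectionOnto (Rᗮ) u : E) := fun _ => rfl
  have hP_mem : ∀ u, P u ∈ Rᗮ := fun u => (Submodule.orthogonalProjectionOnto (Rᗮ) u).2
  have hP_of_memK : ∀ u ∈ Rᗮ, P u = u := fun u hu => Submodule.starProjection_eq_self_iff.mpr hu
  have hP_of_memR : ∀ u ∈ R, P u = 0 := by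
    intro u hu
    have hmem : u ∈ Rᗮᗮ := by rw [Submodule.orthogonal_orthogonal]; exact hu
    rw [hPval, Submodule.orthogonalProjectionOnto_apply_of_mem_orthogonal hmem,
      Submodule.coe_zero]
  -- group action facts
  have hgD : ∀ g, g ∈ G → ∀ x : M.domain, (g : E →L[ℂ] E) (x : E) ∈ M.domain :=
    fun g hg x => (hcomm g hg x).choose
  have hgM : ∀ g, ∀ hg : g ∈ G, ∀ x : M.domain,
      M ⟨(g : E →L[ℂ] E) (x : E), hgD g hg x⟩ = (g : E →L[ℂ] E) (M x) :=
    fun g hg x => (hcomm g hg x).choose_spec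
  have hgSm : ∀ g, ∀ hg : g ∈ G, ∀ (δ : ℝ) (x : M.domain),
      (g : E →L[ℂ] E) (Sm M δ x) = Sm M δ ⟨(g : E →L[ℂ] E) (x : E), hgD g hg x⟩ := by
    intro g hg δ x
    rw [Sm_apply, Sm_apply, map_add, map_smul]
    congr 1
    exact (hgM g hg x).symm
  have hgV : ∀ g, g ∈ G → ∀ v ∈ V, (g : E →L[ℂ] E) v ∈ V := by
    rintro g hg v ⟨x, rfl⟩
    rw [hgSm g hg ε x]
    exact LinearMap.mem_range_self _ _
  have hgR : ∀ g, g ∈ G → ∀ u ∈ R, (g : E →L[ℂ] E) u ∈ R := by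
    intro g hg u hu
    refine hclV' _ ?_
    have himg : (g : E →L[ℂ] E) '' closure (V : Set E)
        ⊆ closure ((g : E →L[ℂ] E) '' (V : Set E)) :=
      image_closure_subset_closure_image (g : E →L[ℂ] E).continuous
    have h2 : ((g : E →L[ℂ] E) '' (V : Set E)) ⊆ (V : Set E) := by
      rintro _ ⟨v, hv, rfl⟩
      exact hgV g hg v hv
    exact closure_mono h2 (himg ⟨u, hclV _ hu, rfl⟩)
  have hstar : ∀ g : unitary (E →L[ℂ] E), ContinuousLinearMap.adjoint (g : E →L[ℂ] E)
      = ((g⁻¹ : unitary (E →L[ℂ] E)) : E →L[ℂ] E) := by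
    intro g
    rw [← ContinuousLinearMap.star_eq_adjoint, ← Unitary.coe_star, Unitary.star_eq_inv]
  have hgK : ∀ g, g ∈ G → ∀ u ∈ Rᗮ, (g : E →L[ℂ] E) u ∈ Rᗮ := by
    intro g hg u hu
    rw [Submodule.mem_orthogonal]
    intro v hv
    rw [← ContinuousLinearMap.adjoint_inner_left, hstar g]
    exact (Submodule.mem_orthogonal R u).mp hu _ (hgR g⁻¹ (inv_mem hg) v hv)
  -- W and P commute with every g ∈ G
  have hWcomm : ∀ g ∈ G, W * (g : E →L[ℂ] E) = (g : E →L[ℂ] E) * W := by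
    intro g hg
    ext u
    rw [ContinuousLinearMap.mul_apply, ContinuousLinearMap.mul_apply]
    obtain ⟨a, ha, b, hb, rfl⟩ := R.exists_add_mem_mem_orthogonal u
    have hcl : IsClosed {w : E | W ((g : E →L[ℂ] E) w) = (g : E →L[ℂ] E) (W w)} :=
      isClosed_eq (W.continuous.comp (g : E →L[ℂ] E).continuous)
        ((g : E →L[ℂ] E).continuous.comp W.continuous)
    have hsub : (V : Set E) ⊆ {w : E | W ((g : E →L[ℂ] E) w) = (g : E →L[ℂ] E) (W w)} := by
      rintro _ ⟨x, rfl⟩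
      show W ((g : E →L[ℂ] E) (Sm M ε x)) = (g : E →L[ℂ] E) (W (Sm M ε x))
      rw [hgSm g hg ε x, hW1, hW1, hgSm g hg (-ε) x]
    have ha' : W ((g : E →L[ℂ] E) a) = (g : E →L[ℂ] E) (W a) :=
      closure_minimal hsub hcl (hclV _ ha)
    have hb' : W ((g : E →L[ℂ] E) b) = (g : E →L[ℂ] E) (W b) := by
      rw [hW2 _ (hgK g hg b hb), hW2 b hb, map_zero]
    rw [map_add, map_add, ha', hb', ← map_add, ← map_add]
  have hPcomm : ∀ g ∈ G, P * (g : E →L[ℂ] E) = (g : E →L[ℂ] E) * P := by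
    intro g hg
    ext u
    rw [ContinuousLinearMap.mul_apply, ContinuousLinearMap.mul_apply]
    obtain ⟨a, ha, b, hb, rfl⟩ := R.exists_add_mem_mem_orthogonal u
    have ha' : P ((g : E →L[ℂ] E) a) = (g : E →L[ℂ] E) (P a) := by
      rw [hP_of_memR _ (hgR g hg a ha), hP_of_memR a ha, map_zero]
    have hb' : P ((g : E →L[ℂ] E) b) = (g : E →L[ℂ] E) (P b) := by
      rw [hP_of_memK _ (hgK g hg b hb), hP_of_memK b hb]
    rw [map_add, map_add, ha', hb', ← map_add, ← map_add]
  have hWP := habelian W P hWcomm hPcomm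
  have hPW : ∀ u, P (W u) = 0 := by
    intro u
    have h1 : (P * W) u = (W * P) u := by rw [hWP]
    rw [ContinuousLinearMap.mul_apply, ContinuousLinearMap.mul_apply] at h1
    rw [h1, hW2 _ (hP_mem u)]
  have hSneg : ∀ x : M.domain, Sm M (-ε) x ∈ R := by
    intro x
    have h0 : P (Sm M (-ε) x) = 0 := by rw [← hW1 x]; exact hPW _
    have h1 : Submodule.orthogonalProjectionOnto (Rᗮ) (Sm M (-ε) x) = 0 := by
      rw [hPval] at h0
      exact Subtype.ext h0
    have h2 := Submodule.orthogonalProjectionOnto_eq_zero_iff.mp h1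
    rwa [Submodule.orthogonal_orthogonal] at h2
  -- conclude `Rᗮ = ⊥`
  have hεne : ε ≠ 0 := by
    intro h
    rw [h] at hε
    norm_num at hε
  have hK_bot : Rᗮ = ⊥ := by
    rw [Submodule.eq_bot_iff]
    intro z hz
    have h1 : ∀ x : M.domain, ⟪Sm M ε x, z⟫_ℂ = 0 := fun x =>
      (Submodule.mem_orthogonal R z).mp hz _ (hmemR _ (LinearMap.mem_range_self _ x))
    have h2 : ∀ x : M.domain, ⟪Sm M (-ε) x, z⟫_ℂ = 0 := fun x =>
      (Submodule.mem_orthogonal R z).mp hz _ (hSneg x)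
    have h3 : ∀ x : M.domain, ⟪(x : E), z⟫_ℂ = 0 := by
      intro x
      have e : Sm M ε x - Sm M (-ε) x = (((2 * ε : ℝ) : ℂ) * Complex.I) • (x : E) := by
        rw [Sm_apply, Sm_apply]
        push_cast
        module
      have h5 : ⟪Sm M ε x - Sm M (-ε) x, z⟫_ℂ = 0 := by
        rw [inner_sub_left, h1 x, h2 x, sub_zero]
      rw [e, inner_smul_left] at h5
      have hc : (starRingEnd ℂ) (((2 * ε : ℝ) : ℂ) * Complex.I) ≠ 0 := by
        simp only [ne_eq, map_eq_zero, mul_eq_zero, Complex.I_ne_zero, or_false]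
        exact_mod_cast mul_ne_zero two_ne_zero hεne
      exact (mul_eq_zero.mp h5).resolve_left hc
    have h4 : ∀ v : M.domain, ⟪z, (v : E)⟫_ℂ = 0 := fun v => by
      rw [← inner_conj_symm, h3 v, map_zero]
    exact Dense.eq_zero_of_inner_left ℂ hdense (fun v hv => h4 ⟨v, hv⟩)
  rw [Submodule.dense_iff_topologicalClosure_eq_top]
  exact Submodule.orthogonal_eq_bot_iff.mp hK_bot

theorem adjoint_antitone {S T : E →ₗ.[ℂ] E} (hS : Dense (S.domain : Set E))
    (hT : Dense (T.domain : Set E)) (h : S ≤ T) : T.adjoint ≤ S.adjoint := by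
  have hform : S.IsFormalAdjoint T.adjoint := by
    intro x y
    have h1 : ⟪T.adjoint y, ((⟨(x : E), h.1 x.2⟩ : T.domain) : E)⟫_ℂ
        = ⟪(y : E), T ⟨(x : E), h.1 x.2⟩⟫_ℂ :=
      LinearPMap.adjoint_isFormalAdjoint hT y ⟨(x : E), h.1 x.2⟩
    have h2 : T ⟨(x : E), h.1 x.2⟩ = S x := (h.2 rfl).symm
    rw [h2] at h1
    calc ⟪S x, (y : E)⟫_ℂ = conj ⟪(y : E), S x⟫_ℂ := (inner_conj_symm _ _).symm
    _ = conj ⟪T.adjoint y, (x : E)⟫_ℂ := by rw [h1]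
    _ = ⟪(x : E), T.adjoint y⟫_ℂ := inner_conj_symm _ _
  exact hform.le_adjoint hS

theorem adjoint_symmetric
    (hdense : Dense (M.domain : Set E))
    (hsym : ∀ u v : M.domain, ⟪M u, (v : E)⟫_ℂ = ⟪(u : E), M v⟫_ℂ)
    (hV1 : Dense ((LinearMap.range (Sm M 1) : Submodule ℂ E) : Set E))
    (hV2 : Dense ((LinearMap.range (Sm M (-1)) : Submodule ℂ E) : Set E)) :
    ∀ x y : M.adjoint.domain, ⟪M.adjoint x, (y : E)⟫_ℂ = ⟪(x : E), M.adjoint y⟫_ℂ := by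
  have hε : (1 : ℝ) ^ 2 = 1 := one_pow 2
  set V : Submodule ℂ E := LinearMap.range (Sm M 1) with hVdef
  have hinj := Sm_injective hsym hε
  set eqv : M.domain ≃ₗ[ℂ] V := LinearEquiv.ofInjective (Sm M 1) hinj with heqv
  have hSm_symm : ∀ v : V, Sm M 1 (eqv.symm v) = (v : E) := fun v =>
    LinearEquiv.ofInjective_symm_apply (Sm M 1) v
  -- the "resolvent" J and Q = M ∘ J
  let JFun : V →ₗ[ℂ] E := M.domain.subtype.comp eqv.symm.toLinearMap
  let QFun : V →ₗ[ℂ] E := M.toFun.comp eqv.symm.toLinearMap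
  have hJbound : ∀ v : V, ‖JFun v‖ ≤ 1 * ‖v‖ := by
    intro v
    have h0 := norm_le_Sm hsym hε (eqv.symm v)
    rw [hSm_symm v] at h0
    rw [one_mul]
    exact h0
  have hQbound : ∀ v : V, ‖QFun v‖ ≤ 1 * ‖v‖ := by
    intro v
    have h0 := normM_le_Sm hsym hε (eqv.symm v)
    rw [hSm_symm v] at h0
    rw [one_mul]
    exact h0
  let J : E →L[ℂ] E := extendDense V hV1 (JFun.mkContinuous 1 hJbound)
  let Q : E →L[ℂ] E := extendDense V hV1 (QFun.mkContinuous 1 hQbound)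
  have hcoe : ∀ (x : M.domain) (hmem : Sm M 1 x ∈ V), (⟨Sm M 1 x, hmem⟩ : V) = eqv x := by
    intro x hmem
    refine Subtype.ext ?_
    rw [heqv, LinearEquiv.ofInjective_apply]
  have hJ : ∀ x : M.domain, J (Sm M 1 x) = (x : E) := by
    intro x
    have hmem : Sm M 1 x ∈ V := LinearMap.mem_range_self _ x
    have h1 : J (Sm M 1 x) = JFun ⟨Sm M 1 x, hmem⟩ :=
      extendDense_eq V hV1 (JFun.mkContinuous 1 hJbound) ⟨Sm M 1 x, hmem⟩
    rw [h1, hcoe x hmem]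
    show (eqv.symm (eqv x) : E) = (x : E)
    rw [LinearEquiv.symm_apply_apply]
  have hQ : ∀ x : M.domain, Q (Sm M 1 x) = M x := by
    intro x
    have hmem : Sm M 1 x ∈ V := LinearMap.mem_range_self _ x
    have h1 : Q (Sm M 1 x) = QFun ⟨Sm M 1 x, hmem⟩ :=
      extendDense_eq V hV1 (QFun.mkContinuous 1 hQbound) ⟨Sm M 1 x, hmem⟩
    rw [h1, hcoe x hmem]
    show M (eqv.symm (eqv x)) = M x
    rw [LinearEquiv.symm_apply_apply]
  have key1 : ∀ (x : M.domain) (u : E), ⟪M x, J u⟫_ℂ = ⟪(x : E), Q u⟫_ℂ := by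
    intro x
    have hfc : Continuous fun u : E => ⟪M x, J u⟫_ℂ := continuous_const.inner J.continuous
    have hgc : Continuous fun u : E => ⟪(x : E), Q u⟫_ℂ := continuous_const.inner Q.continuous
    have heqon : Set.EqOn (fun u : E => ⟪M x, J u⟫_ℂ)
        (fun u : E => ⟪(x : E), Q u⟫_ℂ) (V : Set E) := by
      rintro _ ⟨y, rfl⟩
      simp only
      rw [hJ y, hQ y]
      exact hsym x y
    exact fun u => congrFun (hfc.ext_on hV1 hgc heqon) u
  have keyQ : ∀ u : E, Q u = u - Complex.I • J u := by
    have hfc : Continuous fun u : E => Q u := Q.continuous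
    have hgc : Continuous fun u : E => u - Complex.I • J u :=
      continuous_id.sub (J.continuous.const_smul _)
    have heqon : Set.EqOn (fun u : E => Q u)
        (fun u : E => u - Complex.I • J u) (V : Set E) := by
      rintro _ ⟨y, rfl⟩
      simp only
      rw [hQ y, hJ y, Sm_apply]
      push_cast
      module
    exact fun u => congrFun (hfc.ext_on hV1 hgc heqon) u
  have hmemA : ∀ u : E, J u ∈ M.adjoint.domain := by
    intro u
    apply LinearPMap.mem_adjoint_domain_of_exists
    refine ⟨Q u, fun x => ?_⟩
    calc ⟪Q u, (x : E)⟫_ℂ = conj ⟪(x : E), Q u⟫_ℂ := (inner_conj_symm _ _).symm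
    _ = conj ⟪M x, J u⟫_ℂ := by rw [key1 x u]
    _ = ⟪J u, M x⟫_ℂ := inner_conj_symm _ _
  have hvalA : ∀ u : E, M.adjoint ⟨J u, hmemA u⟩ = Q u := by
    intro u
    apply LinearPMap.adjoint_apply_eq hdense
    intro x
    calc ⟪Q u, (x : E)⟫_ℂ = conj ⟪(x : E), Q u⟫_ℂ := (inner_conj_symm _ _).symm
    _ = conj ⟪M x, J u⟫_ℂ := by rw [key1 x u]
    _ = ⟪J u, M x⟫_ℂ := inner_conj_symm _ _
  have hform := LinearPMap.adjoint_isFormalAdjoint (T := M) hdense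
  have hker : ∀ z : M.adjoint.domain, M.adjoint z = -Complex.I • (z : E) → (z : E) = 0 := by
    intro z hz
    have h4 : ∀ y : M.domain, ⟪Sm M (-1) y, (z : E)⟫_ℂ = 0 := by
      intro y
      have h5 : ⟪(z : E), M y⟫_ℂ = Complex.I * ⟪(z : E), (y : E)⟫_ℂ := by
        rw [← hform z y, hz, inner_smul_left]
        simp
      have e1 : ⟪M y, (z : E)⟫_ℂ = -Complex.I * ⟪(y : E), (z : E)⟫_ℂ := by
        calc ⟪M y, (z : E)⟫_ℂ = conj ⟪(z : E), M y⟫_ℂ := (inner_conj_symm _ _).symm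
        _ = conj (Complex.I * ⟪(z : E), (y : E)⟫_ℂ) := by rw [h5]
        _ = -Complex.I * ⟪(y : E), (z : E)⟫_ℂ := by
            rw [map_mul, Complex.conj_I, inner_conj_symm]
      have e2 : conj (((-1 : ℝ) : ℂ) * Complex.I) = Complex.I := by
        simp
      rw [Sm_apply, inner_add_left, inner_smul_left, e1, e2]
      ring
    have h6 : ∀ v : (LinearMap.range (Sm M (-1)) : Submodule ℂ E), ⟪(z : E), (v : E)⟫_ℂ = 0 := by
      rintro ⟨_, y, rfl⟩
      rw [← inner_conj_symm, h4 y, map_zero]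
    exact Dense.eq_zero_of_inner_left ℂ hV2 (fun v hv => h6 ⟨v, hv⟩)
  have hsurj : ∀ z : M.adjoint.domain, ∃ u : E, J u = (z : E) ∧ Q u = M.adjoint z := by
    intro z
    set u : E := M.adjoint z + Complex.I • (z : E) with hu
    set j : M.adjoint.domain := ⟨J u, hmemA u⟩ with hj
    have hAj : M.adjoint j = Q u := hvalA u
    have hd : M.adjoint (j - z) = -Complex.I • ((j - z : M.adjoint.domain) : E) := by
      rw [LinearPMap.map_sub, hAj, keyQ u, hu]
      have : ((j - z : M.adjoint.domain) : E) = J u - (z : E) := by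
        rw [hj]; rfl
      rw [this]
      module
    have h0 : ((j - z : M.adjoint.domain) : E) = 0 := hker _ hd
    have hJz : J u = (z : E) := by
      have : ((j : E) - (z : E)) = 0 := h0
      have h2 := sub_eq_zero.mp this
      rw [hj] at h2
      exact h2
    refine ⟨u, hJz, ?_⟩
    rw [keyQ u, hJz, hu]
    module
  have key3 : ∀ u v : E, ⟪Q u, J v⟫_ℂ = ⟪J u, Q v⟫_ℂ := by
    intro u v
    have hfc : Continuous fun w : E => ⟪Q w, J v⟫_ℂ := Q.continuous.inner continuous_const
    have hgc : Continuous fun w : E => ⟪J w, Q v⟫_ℂ := J.continuous.inner continuous_const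
    have heqon : Set.EqOn (fun w : E => ⟪Q w, J v⟫_ℂ)
        (fun w : E => ⟪J w, Q v⟫_ℂ) (V : Set E) := by
      rintro _ ⟨a, rfl⟩
      simp only
      rw [hQ a, hJ a]
      exact key1 a v
    exact congrFun (hfc.ext_on hV1 hgc heqon) u
  intro x y
  obtain ⟨u, hu1, hu2⟩ := hsurj x
  obtain ⟨v, hv1, hv2⟩ := hsurj y
  rw [← hu2, ← hv2, ← hu1, ← hv1]
  exact key3 u v

end CompleteE

end EsaAux

end

open EsaAux in
/-- **Essential self-adjointness of symmetric operators commuting with a group of unitaries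
with abelian commutant.** -/
theorem stmt0 {E : Type*} [NormedAddCommGroup E] [InnerProductSpace ℂ E] [CompleteSpace E]
    (G : Subgroup (unitary (E →L[ℂ] E)))
    (M : E →ₗ.[ℂ] E)
    (hdense : Dense (M.domain : Set E))
    (hsym : ∀ u v : M.domain, ⟪M u, (v : E)⟫_ℂ = ⟪(u : E), M v⟫_ℂ)
    (hcomm : ∀ g ∈ G, M.CommutesWith (g : E →L[ℂ] E))
    (habelian : ∀ A B : E →L[ℂ] E,
      (∀ g ∈ G, A * (g : E →L[ℂ] E) = (g : E →L[ℂ] E) * A) →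
      (∀ g ∈ G, B * (g : E →L[ℂ] E) = (g : E →L[ℂ] E) * B) →
      A * B = B * A) :
    ∃! T : E →ₗ.[ℂ] E, M ≤ T ∧ IsSelfAdjoint T := by
  have hV1 : Dense ((LinearMap.range (Sm M 1) : Submodule ℂ E) : Set E) :=
    dense_range_Sm G hdense hsym hcomm habelian (by norm_num)
  have hV2 : Dense ((LinearMap.range (Sm M (-1)) : Submodule ℂ E) : Set E) :=
    dense_range_Sm G hdense hsym hcomm habelian (by norm_num)
  have hAsym := adjoint_symmetric hdense hsym hV1 hV2
  have hMA : M ≤ M.adjoint :=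
    LinearPMap.IsFormalAdjoint.le_adjoint hdense (fun x y => hsym x y)
  have hAd : Dense (M.adjoint.domain : Set E) := hdense.mono (fun a ha => hMA.1 ha)
  have hA1 : M.adjoint ≤ M.adjoint.adjoint :=
    LinearPMap.IsFormalAdjoint.le_adjoint hAd (fun x y => hAsym x y)
  have hA2 : M.adjoint.adjoint ≤ M.adjoint := adjoint_antitone hdense hAd hMA
  have hAA : M.adjoint.adjoint = M.adjoint := le_antisymm hA2 hA1
  have hSA : IsSelfAdjoint M.adjoint := LinearPMap.isSelfAdjoint_def.mpr hAA
  refine ⟨M.adjoint, ⟨hMA, hSA⟩, ?_⟩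
  rintro T ⟨hMT, hTsa⟩
  have hTd : Dense (T.domain : Set E) := hTsa.dense_domain
  have h1 : T ≤ M.adjoint := by
    have h0 := adjoint_antitone hdense hTd hMT
    rwa [LinearPMap.isSelfAdjoint_def.mp hTsa] at h0
  have h2 : M.adjoint ≤ T := by
    have h0 := adjoint_antitone hTd hAd h1
    rwa [LinearPMap.isSelfAdjoint_def.mp hTsa, hAA] at h0
  exact le_antisymm h1 h2
end
end

section
/- Let (M, D) be a closed, symmetric, densely defined operator on a Hilbert space that commutes with a group G of unitaries whose commutant algebra is abelian. Then the range of M + i equals the whole space. (Key step: the resolvent-type operator R obtained from (M+i)^{-1} composed with projection onto the range of M+i is normal, and any vector in its kernel is orthogonal to the range of R, which is dense.) -/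
open scoped InnerProductSpace

/-- For a closed, densely defined, symmetric operator commuting with a group of unitaries
whose commutant is abelian, the range of `M + i` is the whole space. -/
theorem stmt1 {E : Type*} [NormedAddCommGroup E] [InnerProductSpace ℂ E] [CompleteSpace E]
    (G : Subgroup (unitary (E →L[ℂ] E)))
    (M : E →ₗ.[ℂ] E)
    (hclosed : M.IsClosed)
    (hdense : Dense (M.domain : Set E))
    (hsym : ∀ u v : M.domain, ⟪M u, (v : E)⟫_ℂ = ⟪(u : E), M v⟫_ℂ)
    (hcomm : ∀ g ∈ G, M.CommutesWith (g : E →L[ℂ] E))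
    (habelian : ∀ A B : E →L[ℂ] E,
      (∀ g ∈ G, A * (g : E →L[ℂ] E) = (g : E →L[ℂ] E) * A) →
      (∀ g ∈ G, B * (g : E →L[ℂ] E) = (g : E →L[ℂ] E) * B) →
      A * B = B * A) :
    ∀ y : E, ∃ φ : M.domain, M φ + Complex.I • (φ : E) = y := by
  set T : M.domain →ₗ[ℂ] E := M.toFun + Complex.I • M.domain.subtype with hT
  have hTapp : ∀ φ : M.domain, T φ = M φ + Complex.I • (φ : E) := fun φ => rfl
  -- norm identity
  have hTnorm : ∀ φ : M.domain, ‖T φ‖ ^ 2 = ‖M φ‖ ^ 2 + ‖(φ : E)‖ ^ 2 := by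
    intro φ
    rw [hTapp, norm_add_sq (𝕜 := ℂ)]
    have h1 : ⟪M φ, Complex.I • (φ : E)⟫_ℂ = Complex.I * ⟪M φ, (φ : E)⟫_ℂ := inner_smul_right _ _ _
    have h2 : ⟪M φ, (φ : E)⟫_ℂ = (starRingEnd ℂ) ⟪M φ, (φ : E)⟫_ℂ :=
      (hsym φ φ).trans (inner_conj_symm _ _).symm
    have h3 : (⟪M φ, (φ : E)⟫_ℂ).im = 0 := Complex.conj_eq_iff_im.mp h2.symm
    have h4 : (⟪M φ, Complex.I • (φ : E)⟫_ℂ).re = 0 := by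
      rw [h1, Complex.mul_re, Complex.I_re, Complex.I_im]
      simp [h3]
    simp [RCLike.re_to_complex, h4, norm_smul]
  have hle : ∀ φ : M.domain, ‖(φ : E)‖ ≤ ‖T φ‖ := by
    intro φ
    have := hTnorm φ
    nlinarith [norm_nonneg (M φ), norm_nonneg (T φ), norm_nonneg ((φ : E)), sq_nonneg (‖M φ‖)]
  have hleM : ∀ φ : M.domain, ‖M φ‖ ≤ ‖T φ‖ := by
    intro φ
    have := hTnorm φ
    nlinarith [norm_nonneg (M φ), norm_nonneg (T φ), norm_nonneg ((φ : E))]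
  have hTinj : Function.Injective T := by
    intro a b hab
    have h : ‖((a - b : M.domain) : E)‖ ≤ ‖T (a - b)‖ := hle _
    rw [map_sub, hab, sub_self, norm_zero] at h
    have : ((a - b : M.domain) : E) = 0 := norm_le_zero_iff.mp h
    have : (a : E) - (b : E) = 0 := by simpa using this
    exact Subtype.ext (sub_eq_zero.mp this)
  set K : Submodule ℂ E := LinearMap.range T with hK
  have hKclosed : IsClosed (K : Set E) := by
    rw [← isSeqClosed_iff_isClosed]
    intro y z hy hyz
    choose φ hφ using fun n => hy n
    have hcau : CauchySeq fun n => ((φ n : E)) := by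
      rw [Metric.cauchySeq_iff]
      intro ε hε
      obtain ⟨N, hN⟩ := Metric.cauchySeq_iff.mp hyz.cauchySeq ε hε
      refine ⟨N, fun m hm n hn => ?_⟩
      have h1 : dist ((φ m : E)) ((φ n : E)) ≤ dist (y m) (y n) := by
        rw [dist_eq_norm, dist_eq_norm, ← hφ m, ← hφ n, ← map_sub]
        have := hle (φ m - φ n)
        simpa using this
      exact lt_of_le_of_lt h1 (hN m hm n hn)
    obtain ⟨x, hx⟩ := cauchySeq_tendsto_of_complete hcau
    have hMlim : Filter.Tendsto (fun n => M (φ n)) Filter.atTop (nhds (z - Complex.I • x)) := by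
      have : ∀ n, M (φ n) = y n - Complex.I • ((φ n : E)) := by
        intro n
        rw [← hφ n, hTapp]
        abel
      simp_rw [this]
      exact hyz.sub (hx.const_smul _)
    have hmem : (x, z - Complex.I • x) ∈ M.graph := by
      have hgr : ∀ n, (((φ n : E)), M (φ n)) ∈ M.graph := fun n => M.mem_graph (φ n)
      have hlim : Filter.Tendsto (fun n => (((φ n : E)), M (φ n))) Filter.atTop
          (nhds (x, z - Complex.I • x)) := hx.prodMk_nhds hMlim
      exact hclosed.mem_of_tendsto hlim (Filter.Eventually.of_forall hgr)
    rw [LinearPMap.mem_graph_iff] at hmem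
    obtain ⟨ψ, hψ1, hψ2⟩ := hmem
    refine ⟨ψ, ?_⟩
    rw [hTapp, hψ1, hψ2]
    module
  haveI hKcomplete : CompleteSpace K := hKclosed.completeSpace_coe
  set e : M.domain ≃ₗ[ℂ] K := LinearEquiv.ofInjective T hTinj with he
  have heapp : ∀ φ : M.domain, ((e φ : K) : E) = T φ := fun φ => rfl
  set P : E →L[ℂ] K := K.orthogonalProjectionOnto with hP
  have hPle : ∀ x : E, ‖((P x : K) : E)‖ ≤ ‖x‖ := by
    intro x
    calc ‖((P x : K) : E)‖ = ‖P x‖ := rfl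
      _ ≤ ‖P‖ * ‖x‖ := P.le_opNorm x
      _ ≤ 1 * ‖x‖ := by
          gcongr
          exact Submodule.orthogonalProjectionOnto_norm_le K
      _ = ‖x‖ := one_mul _
  set R0 : E →ₗ[ℂ] E := M.domain.subtype ∘ₗ (e.symm : K →ₗ[ℂ] M.domain) ∘ₗ (P : E →ₗ[ℂ] K)
    with hR0
  have hR0app : ∀ x : E, R0 x = ((e.symm (P x) : M.domain) : E) := fun x => rfl
  have hTRsub : ∀ x : E, T (e.symm (P x)) = ((P x : K) : E) := by
    intro x
    rw [← heapp, e.apply_symm_apply]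
  have hR0bound : ∀ x : E, ‖R0 x‖ ≤ 1 * ‖x‖ := by
    intro x
    rw [one_mul, hR0app]
    calc ‖((e.symm (P x) : M.domain) : E)‖ ≤ ‖T (e.symm (P x))‖ := hle _
      _ = ‖((P x : K) : E)‖ := by rw [hTRsub]
      _ ≤ ‖x‖ := hPle x
  set R : E →L[ℂ] E := R0.mkContinuous 1 hR0bound with hR
  have hRapp : ∀ x : E, R x = ((e.symm (P x) : M.domain) : E) := fun x => rfl
  have hRT : ∀ φ : M.domain, R (T φ) = (φ : E) := by
    intro φ
    have h1 : P (T φ) = e φ := by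
      rw [← heapp]
      exact Submodule.orthogonalProjectionOnto_mem_subspace_eq_self (e φ)
    rw [hRapp, h1, e.symm_apply_apply]
  -- group action facts
  have hgdom : ∀ g ∈ G, ∀ φ : M.domain,
      ∃ hv : (g : E →L[ℂ] E) (φ : E) ∈ M.domain,
        T ⟨(g : E →L[ℂ] E) (φ : E), hv⟩ = (g : E →L[ℂ] E) (T φ) := by
    intro g hg φ
    obtain ⟨hv, hMv⟩ := hcomm g hg φ
    refine ⟨hv, ?_⟩
    rw [hTapp, hTapp, hMv, map_add, map_smul]
  have hginner : ∀ u : unitary (E →L[ℂ] E), ∀ a b : E,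
      ⟪(u : E →L[ℂ] E) a, (u : E →L[ℂ] E) b⟫_ℂ = ⟪a, b⟫_ℂ := by
    intro u a b
    have h1 : star (u : E →L[ℂ] E) * (u : E →L[ℂ] E) = 1 := (Unitary.mem_iff.mp u.2).1
    calc ⟪(u : E →L[ℂ] E) a, (u : E →L[ℂ] E) b⟫_ℂ
        = ⟪a, ContinuousLinearMap.adjoint (u : E →L[ℂ] E) ((u : E →L[ℂ] E) b)⟫_ℂ :=
          (ContinuousLinearMap.adjoint_inner_right _ _ _).symm
      _ = ⟪a, (star (u : E →L[ℂ] E) * (u : E →L[ℂ] E)) b⟫_ℂ := by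
          rw [ContinuousLinearMap.star_eq_adjoint, ContinuousLinearMap.mul_apply]
      _ = ⟪a, b⟫_ℂ := by rw [h1, ContinuousLinearMap.one_apply]
  have hgK : ∀ g ∈ G, ∀ y ∈ K, (g : E →L[ℂ] E) y ∈ K := by
    intro g hg y hy
    obtain ⟨φ, rfl⟩ := hy
    obtain ⟨hv, hTv⟩ := hgdom g hg φ
    exact ⟨⟨_, hv⟩, hTv⟩
  have hcoeinv : ∀ g : unitary (E →L[ℂ] E),
      ((g⁻¹ : unitary (E →L[ℂ] E)) : E →L[ℂ] E) = star (g : E →L[ℂ] E) := by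
    intro g
    rw [← Unitary.star_eq_inv, Unitary.coe_star]
  have hgKperp : ∀ g ∈ G, ∀ y ∈ Kᗮ, (g : E →L[ℂ] E) y ∈ Kᗮ := by
    intro g hg y hy
    rw [Submodule.mem_orthogonal]
    intro u hu
    have hginv : (g : unitary (E →L[ℂ] E))⁻¹ ∈ G := G.inv_mem hg
    have hu' : ((g⁻¹ : unitary (E →L[ℂ] E)) : E →L[ℂ] E) u ∈ K := hgK _ hginv u hu
    have hgg : (g : E →L[ℂ] E) (((g⁻¹ : unitary (E →L[ℂ] E)) : E →L[ℂ] E) u) = u := by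
      rw [hcoeinv, ← ContinuousLinearMap.mul_apply, (Unitary.mem_iff.mp g.2).2,
        ContinuousLinearMap.one_apply]
    calc ⟪u, (g : E →L[ℂ] E) y⟫_ℂ
        = ⟪(g : E →L[ℂ] E) (((g⁻¹ : unitary (E →L[ℂ] E)) : E →L[ℂ] E) u),
            (g : E →L[ℂ] E) y⟫_ℂ := by rw [hgg]
      _ = ⟪((g⁻¹ : unitary (E →L[ℂ] E)) : E →L[ℂ] E) u, y⟫_ℂ := hginner g _ _
      _ = 0 := (Submodule.mem_orthogonal _ _).mp hy _ hu'
  have hPg : ∀ g ∈ G, ∀ x : E, ((P ((g : E →L[ℂ] E) x) : K) : E) = (g : E →L[ℂ] E) ((P x : K) : E) := by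
    intro g hg x
    apply Submodule.eq_starProjection_of_mem_orthogonal
    · exact hgK g hg _ (P x : K).2
    · have : (g : E →L[ℂ] E) x - (g : E →L[ℂ] E) ((P x : K) : E)
          = (g : E →L[ℂ] E) (x - ((P x : K) : E)) := (map_sub _ _ _).symm
      rw [this]
      exact hgKperp g hg _ (Submodule.sub_starProjection_mem_orthogonal x)
  have hRg : ∀ g ∈ G, ∀ x : E, R ((g : E →L[ℂ] E) x) = (g : E →L[ℂ] E) (R x) := by
    intro g hg x
    obtain ⟨hv, hTv⟩ := hgdom g hg (e.symm (P x))
    have h1 : T ⟨(g : E →L[ℂ] E) ((e.symm (P x) : M.domain) : E), hv⟩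
        = ((P ((g : E →L[ℂ] E) x) : K) : E) := by
      rw [hTv, hTRsub, hPg g hg]
    have h2 : e ⟨(g : E →L[ℂ] E) ((e.symm (P x) : M.domain) : E), hv⟩ = P ((g : E →L[ℂ] E) x) := by
      apply Subtype.ext
      rw [heapp, h1]
    rw [hRapp, ← h2, e.symm_apply_apply, hRapp]
  have hRcomm : ∀ g ∈ G, R * (g : E →L[ℂ] E) = (g : E →L[ℂ] E) * R := by
    intro g hg
    ext x
    simp only [ContinuousLinearMap.mul_apply]
    exact hRg g hg x
  have hRstarcomm : ∀ g ∈ G, star R * (g : E →L[ℂ] E) = (g : E →L[ℂ] E) * star R := by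
    intro g hg
    have h1 := hRcomm _ (G.inv_mem hg)
    rw [hcoeinv] at h1
    have h2 := congrArg star h1
    rw [star_mul, star_mul, star_star] at h2
    exact h2.symm
  have hnormal : R * star R = star R * R := habelian R (star R) hRcomm hRstarcomm
  have hKtop : K = ⊤ := by
    rw [← Submodule.orthogonal_eq_bot_iff]
    rw [Submodule.eq_bot_iff]
    intro y hy
    have hPy : P y = 0 := Submodule.orthogonalProjectionOnto_apply_of_mem_orthogonal hy
    have hRy : R y = 0 := by
      rw [hRapp, hPy, map_zero, Submodule.coe_zero]
    have hstarRy : star R y = 0 := by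
      rw [ContinuousLinearMap.star_eq_adjoint]
      rw [ContinuousLinearMap.star_eq_adjoint] at hnormal
      have hc : ⟪ContinuousLinearMap.adjoint R y, ContinuousLinearMap.adjoint R y⟫_ℂ = 0 := by
        calc ⟪ContinuousLinearMap.adjoint R y, ContinuousLinearMap.adjoint R y⟫_ℂ
            = ⟪y, R (ContinuousLinearMap.adjoint R y)⟫_ℂ :=
              ContinuousLinearMap.adjoint_inner_left _ _ _
          _ = ⟪y, (R * ContinuousLinearMap.adjoint R) y⟫_ℂ := rfl
          _ = ⟪y, (ContinuousLinearMap.adjoint R * R) y⟫_ℂ := by rw [hnormal]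
          _ = ⟪y, ContinuousLinearMap.adjoint R (R y)⟫_ℂ := rfl
          _ = ⟪R y, R y⟫_ℂ := ContinuousLinearMap.adjoint_inner_right _ _ _
          _ = 0 := by rw [hRy, inner_zero_left]
      exact inner_self_eq_zero.mp hc
    have hyfin : ∀ v : M.domain, ⟪y, (v : E)⟫_ℂ = 0 := by
      intro φ
      calc ⟪y, (φ : E)⟫_ℂ = ⟪y, R (T φ)⟫_ℂ := by rw [hRT]
        _ = ⟪ContinuousLinearMap.adjoint R y, T φ⟫_ℂ :=
            (ContinuousLinearMap.adjoint_inner_left _ _ _).symm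
        _ = 0 := by
            rw [← ContinuousLinearMap.star_eq_adjoint, hstarRy, inner_zero_left]
    exact hdense.eq_zero_of_inner_left (𝕜 := ℂ) fun v hv => hyfin ⟨v, hv⟩
  intro y
  have hyK : y ∈ K := hKtop ▸ Submodule.mem_top
  obtain ⟨φ, hφ⟩ := hyK
  exact ⟨φ, by rw [← hTapp]; exact hφ⟩
end

section
/- The Gamma operator Γ = F ∘ I on L²(ℍ, dx), where F is the quaternionic Fourier transform and I the unitary inversion φ(x) ↦ |x|⁻¹φ(x⁻¹), commutes with the unitary actions L₁(g): φ(x) ↦ |g|^{1/2}φ(xg) and R₁(g): φ(x) ↦ |g|^{1/2}φ(gx) for all nonzero quaternions g. -/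
open Quaternion MeasureTheory
open scoped Real Quaternion ENNReal

noncomputable section

instance : MeasurableSpace ℍ[ℝ] := borel _
instance : BorelSpace ℍ[ℝ] := ⟨rfl⟩

/-- The coordinate Lebesgue measure `dx₀dx₁dx₂dx₃` on `ℍ ≅ ℝ⁴`. -/
def qLeb : Measure ℍ[ℝ] :=
  Measure.map (fun v : Fin 4 → ℝ => (Quaternion.equivTuple ℝ).symm v) volume

/-- The self-dual Haar measure `dx = 4 dx₀dx₁dx₂dx₃` on `ℍ`. -/
def muH : Measure ℍ[ℝ] := (4 : ℝ≥0∞) • qLeb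

/-- The quaternionic Fourier transform with respect to `λ(x) = e^{-4πi Re x}`:
`F(φ)(y) = ∫ φ(x) λ(-xy) dx`. -/
def Fq (φ : ℍ[ℝ] → ℂ) (y : ℍ[ℝ]) : ℂ :=
  ∫ x : ℍ[ℝ], φ x * Complex.exp (4 * (π : ℂ) * Complex.I * ((x * y).re : ℝ)) ∂muH

/-- The inversion `I : φ(x) ↦ |x|⁻¹ φ(x⁻¹)`, with `|x| = n(x)²`. -/
def Iq (φ : ℍ[ℝ] → ℂ) (x : ℍ[ℝ]) : ℂ := (((normSq x ^ 2)⁻¹ : ℝ) : ℂ) * φ x⁻¹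

/-- Left dilation action `L₁(g) : φ(x) ↦ |g|^{1/2} φ(xg)` (note `|g|^{1/2} = n(g)`). -/
def L1 (g : ℍ[ℝ]) (φ : ℍ[ℝ] → ℂ) (x : ℍ[ℝ]) : ℂ := ((normSq g : ℝ) : ℂ) * φ (x * g)

/-- Right dilation action `R₁(g) : φ(x) ↦ |g|^{1/2} φ(gx)`. -/
def R1 (g : ℍ[ℝ]) (φ : ℍ[ℝ] → ℂ) (x : ℍ[ℝ]) : ℂ := ((normSq g : ℝ) : ℂ) * φ (g * x)

/-! ### Auxiliary material -/

/-- The tuple equivalence as a linear equivalence on `ℍ[ℝ]`. -/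
def qLE : ℍ[ℝ] ≃ₗ[ℝ] (Fin 4 → ℝ) := QuaternionAlgebra.linearEquivTuple (R := ℝ) (-1) 0 (-1)

/-- `qLE.symm` as a continuous linear equivalence. -/
def qCLE : (Fin 4 → ℝ) ≃L[ℝ] ℍ[ℝ] := qLE.symm.toContinuousLinearEquiv

/-- The basis `1, i, j, k` of `ℍ[ℝ]`. -/
def qB : Module.Basis (Fin 4) ℝ ℍ[ℝ] := Module.Basis.ofEquivFun qLE

lemma qLE_apply (q : ℍ[ℝ]) : qLE q = ![q.re, q.imI, q.imJ, q.imK] := rfl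
lemma qLE_symm_apply (v : Fin 4 → ℝ) : qLE.symm v = ⟨v 0, v 1, v 2, v 3⟩ := rfl
lemma qLE_symm_re (v : Fin 4 → ℝ) : (qLE.symm v).re = v 0 := rfl
lemma qLE_symm_imI (v : Fin 4 → ℝ) : (qLE.symm v).imI = v 1 := rfl
lemma qLE_symm_imJ (v : Fin 4 → ℝ) : (qLE.symm v).imJ = v 2 := rfl
lemma qLE_symm_imK (v : Fin 4 → ℝ) : (qLE.symm v).imK = v 3 := rfl

lemma qLeb_eq_map : qLeb = Measure.map qCLE volume := by
  unfold qLeb qCLE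
  congr 1

instance : qLeb.IsAddHaarMeasure := by
  rw [qLeb_eq_map]
  exact qCLE.isAddHaarMeasure_map volume

instance : muH.IsAddHaarMeasure := by
  unfold muH
  exact Measure.IsAddHaarMeasure.smul (μ := qLeb) (by norm_num) (by norm_num)

lemma toMatrix_mulLeft (g : ℍ[ℝ]) :
    LinearMap.toMatrix qB qB (LinearMap.mulLeft ℝ g) =
      !![g.re, -g.imI, -g.imJ, -g.imK;
         g.imI, g.re, -g.imK, g.imJ;
         g.imJ, g.imK, g.re, -g.imI;
         g.imK, -g.imJ, g.imI, g.re] := by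
  ext i j
  rw [LinearMap.toMatrix_apply, qB, Module.Basis.coe_ofEquivFun]
  fin_cases i <;> fin_cases j <;>
    simp [qB, Module.Basis.coe_ofEquivFun, Module.Basis.ofEquivFun_repr_apply, qLE_apply, qLE_symm_re, qLE_symm_imI, qLE_symm_imJ, qLE_symm_imK,
      Quaternion.re_mul, Quaternion.imI_mul, Quaternion.imJ_mul, Quaternion.imK_mul,
      Pi.single_apply, LinearMap.mulLeft_apply, LinearMap.mulRight_apply]

lemma det_mulLeft (g : ℍ[ℝ]) : LinearMap.det (LinearMap.mulLeft ℝ g) = normSq g ^ 2 := by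
  rw [← LinearMap.det_toMatrix qB, toMatrix_mulLeft]
  simp [Matrix.det_succ_row_zero, Fin.sum_univ_succ, normSq_def', show Fin.succAbove (1 : Fin 4) (2 : Fin 3) = 3 from rfl, show Fin.succAbove (2 : Fin 4) (2 : Fin 3) = 3 from rfl, show Fin.succAbove (3 : Fin 4) (2 : Fin 3) = 2 from rfl]
  ring

lemma toMatrix_mulRight (g : ℍ[ℝ]) :
    LinearMap.toMatrix qB qB (LinearMap.mulRight ℝ g) =
      !![g.re, -g.imI, -g.imJ, -g.imK;
         g.imI, g.re, g.imK, -g.imJ;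
         g.imJ, -g.imK, g.re, g.imI;
         g.imK, g.imJ, -g.imI, g.re] := by
  ext i j
  rw [LinearMap.toMatrix_apply, qB, Module.Basis.coe_ofEquivFun]
  fin_cases i <;> fin_cases j <;>
    simp [qB, Module.Basis.coe_ofEquivFun, Module.Basis.ofEquivFun_repr_apply, qLE_apply, qLE_symm_re, qLE_symm_imI, qLE_symm_imJ, qLE_symm_imK,
      Quaternion.re_mul, Quaternion.imI_mul, Quaternion.imJ_mul, Quaternion.imK_mul,
      Pi.single_apply, LinearMap.mulLeft_apply, LinearMap.mulRight_apply]

lemma det_mulRight (g : ℍ[ℝ]) : LinearMap.det (LinearMap.mulRight ℝ g) = normSq g ^ 2 := by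
  rw [← LinearMap.det_toMatrix qB, toMatrix_mulRight]
  simp [Matrix.det_succ_row_zero, Fin.sum_univ_succ, normSq_def', show Fin.succAbove (1 : Fin 4) (2 : Fin 3) = 3 from rfl, show Fin.succAbove (2 : Fin 4) (2 : Fin 3) = 3 from rfl, show Fin.succAbove (3 : Fin 4) (2 : Fin 3) = 2 from rfl]
  ring

lemma normSq_pos' {g : ℍ[ℝ]} (hg : g ≠ 0) : 0 < normSq g := by
  have h0 : normSq g ≠ 0 := fun h => hg (normSq_eq_zero.mp h)
  exact lt_of_le_of_ne normSq_nonneg (Ne.symm h0)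

lemma map_mulLeft_muH (g : ℍ[ℝ]) (hg : g ≠ 0) :
    Measure.map (fun x : ℍ[ℝ] => g * x) muH
      = ENNReal.ofReal ((normSq g ^ 2)⁻¹) • muH := by
  have hdet : LinearMap.det (LinearMap.mulLeft ℝ g) ≠ 0 := by
    rw [det_mulLeft]; exact pow_ne_zero _ (ne_of_gt (normSq_pos' hg))
  have h := Measure.map_linearMap_addHaar_eq_smul_addHaar muH hdet
  have hcoe : ⇑(LinearMap.mulLeft ℝ g) = fun x : ℍ[ℝ] => g * x := rfl
  rw [hcoe, det_mulLeft] at h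
  rw [h, abs_of_nonneg (by positivity)]

lemma map_mulRight_muH (g : ℍ[ℝ]) (hg : g ≠ 0) :
    Measure.map (fun x : ℍ[ℝ] => x * g) muH
      = ENNReal.ofReal ((normSq g ^ 2)⁻¹) • muH := by
  have hdet : LinearMap.det (LinearMap.mulRight ℝ g) ≠ 0 := by
    rw [det_mulRight]; exact pow_ne_zero _ (ne_of_gt (normSq_pos' hg))
  have h := Measure.map_linearMap_addHaar_eq_smul_addHaar muH hdet
  have hcoe : ⇑(LinearMap.mulRight ℝ g) = fun x : ℍ[ℝ] => x * g := rfl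
  rw [hcoe, det_mulRight] at h
  rw [h, abs_of_nonneg (by positivity)]

lemma integral_mulLeft (g : ℍ[ℝ]) (hg : g ≠ 0) (h : ℍ[ℝ] → ℂ) :
    ∫ x, h x ∂muH = (normSq g ^ 2 : ℝ) • ∫ x, h (g * x) ∂muH := by
  have emb : MeasurableEmbedding (fun x : ℍ[ℝ] => g * x) :=
    (Homeomorph.mulLeft₀ g hg).measurableEmbedding
  have h1 : ∫ x, h (g * x) ∂muH
      = ∫ y, h y ∂(Measure.map (fun x : ℍ[ℝ] => g * x) muH) :=
    (emb.integral_map h).symm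
  rw [h1, map_mulLeft_muH g hg, integral_smul_measure,
    ENNReal.toReal_ofReal (by positivity), smul_smul]
  have hn : (normSq g ^ 2 : ℝ) ≠ 0 := by
    have := normSq_pos' hg; positivity
  rw [mul_inv_cancel₀ hn, one_smul]

lemma integral_mulRight (g : ℍ[ℝ]) (hg : g ≠ 0) (h : ℍ[ℝ] → ℂ) :
    ∫ x, h x ∂muH = (normSq g ^ 2 : ℝ) • ∫ x, h (x * g) ∂muH := by
  have emb : MeasurableEmbedding (fun x : ℍ[ℝ] => x * g) :=
    (Homeomorph.mulRight₀ g hg).measurableEmbedding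
  have h1 : ∫ x, h (x * g) ∂muH
      = ∫ y, h y ∂(Measure.map (fun x : ℍ[ℝ] => x * g) muH) :=
    (emb.integral_map h).symm
  rw [h1, map_mulRight_muH g hg, integral_smul_measure,
    ENNReal.toReal_ofReal (by positivity), smul_smul]
  have hn : (normSq g ^ 2 : ℝ) ≠ 0 := by
    have := normSq_pos' hg; positivity
  rw [mul_inv_cancel₀ hn, one_smul]

lemma re_mul_comm (a b : ℍ[ℝ]) : (a * b).re = (b * a).re := by
  simp [Quaternion.re_mul]; ring

/-- **The Gamma operator `Γ = F ∘ I` commutes with the dilation actions `L₁` and `R₁`**: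
`Γ(L₁(g)φ) = L₁(g)(Γφ)` and `Γ(R₁(g)φ) = R₁(g)(Γφ)` for every nonzero quaternion `g`. -/
theorem stmt11 (g : ℍ[ℝ]) (hg : g ≠ 0) (φ : ℍ[ℝ] → ℂ)
    (hφ : Integrable (Iq φ) muH) :
    (∀ y : ℍ[ℝ], Fq (Iq (L1 g φ)) y = L1 g (Fq (Iq φ)) y) ∧
    (∀ y : ℍ[ℝ], Fq (Iq (R1 g φ)) y = R1 g (Fq (Iq φ)) y) := by
  have hns : (normSq g : ℝ) ≠ 0 := ne_of_gt (normSq_pos' hg)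
  have hnsC : ((normSq g : ℝ) : ℂ) ≠ 0 := by exact_mod_cast hns
  constructor
  · intro y
    have step1 : Fq (Iq (L1 g φ)) y
        = (normSq g ^ 2 : ℝ) • ∫ u, Iq (L1 g φ) (g * u) *
            Complex.exp (4 * (π : ℂ) * Complex.I * (((g * u) * y).re : ℝ)) ∂muH := by
      rw [Fq]
      exact integral_mulLeft g hg _
    have step2 : ∀ u : ℍ[ℝ],
        Iq (L1 g φ) (g * u) * Complex.exp (4 * (π : ℂ) * Complex.I * (((g * u) * y).re : ℝ))
          = ((((normSq g ^ 2)⁻¹ * normSq g : ℝ)) : ℂ) *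
            (Iq φ u * Complex.exp (4 * (π : ℂ) * Complex.I * ((u * (y * g)).re : ℝ))) := by
      intro u
      have hinv : (g * u)⁻¹ * g = u⁻¹ := by
        rw [mul_inv_rev, mul_assoc, inv_mul_cancel₀ hg, mul_one]
      have hre : ((g * u) * y).re = (u * (y * g)).re := by
        rw [mul_assoc]
        rw [re_mul_comm g (u * y), mul_assoc]
      simp only [Iq, L1, hinv, hre, map_mul]
      push_cast
      rw [mul_pow, mul_inv]
      ring
    rw [step1]
    simp only [step2]
    rw [integral_const_mul]
    have : (∫ u, Iq φ u *
        Complex.exp (4 * (π : ℂ) * Complex.I * ((u * (y * g)).re : ℝ)) ∂muH)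
        = Fq (Iq φ) (y * g) := rfl
    rw [this, L1]
    rw [Complex.real_smul]
    push_cast
    field_simp
  · intro y
    have step1 : Fq (Iq (R1 g φ)) y
        = (normSq g ^ 2 : ℝ) • ∫ u, Iq (R1 g φ) (u * g) *
            Complex.exp (4 * (π : ℂ) * Complex.I * (((u * g) * y).re : ℝ)) ∂muH := by
      rw [Fq]
      exact integral_mulRight g hg _
    have step2 : ∀ u : ℍ[ℝ],
        Iq (R1 g φ) (u * g) * Complex.exp (4 * (π : ℂ) * Complex.I * (((u * g) * y).re : ℝ))
          = ((((normSq g ^ 2)⁻¹ * normSq g : ℝ)) : ℂ) *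
            (Iq φ u * Complex.exp (4 * (π : ℂ) * Complex.I * ((u * (g * y)).re : ℝ))) := by
      intro u
      have hinv : g * (u * g)⁻¹ = u⁻¹ := by
        rw [mul_inv_rev, ← mul_assoc, mul_inv_cancel₀ hg, one_mul]
      have hre : ((u * g) * y).re = (u * (g * y)).re := by rw [mul_assoc]
      simp only [Iq, R1, hinv, hre, map_mul]
      push_cast
      rw [mul_pow, mul_inv]
      ring
    rw [step1]
    simp only [step2]
    rw [integral_const_mul]
    have : (∫ u, Iq φ u *
        Complex.exp (4 * (π : ℂ) * Complex.I * ((u * (g * y)).re : ℝ)) ∂muH)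
        = Fq (Iq φ) (g * y) := rfl
    rw [this, R1]
    rw [Complex.real_smul]
    push_cast
    field_simp
end
end
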